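/- Let 𝒱(u,v) = (2/σ) · (1 − uv) / ((1−u)³(1−v)³ Λ(u)) where Λ(u) = Σ_{k=0}^{p−1} u^k Σ_{r=k+1}^{p} z_r C(r−k+1, 2), with z_r ≥ 0, z_p > 0, σ > 0, and z := Σ_{r=1}^p C(r+1,2) z_r. Then u·𝒱(u,0) = (2/σ) · 1/(I_0(u) − I_0(1)), where I_0(u) = u + z/u − Σ_{r=0}^{p} z_r u^{r+1} and the weights satisfy z + Σ_{r=0}^p (r+1) z_r = 1. -/

import Mathlib

open Finset

open Polynomial in
lemma key_poly (r : ℕ) (hr : 1 ≤ r) :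
    (1 - (X : ℝ[X])) ^ 3 * ∑ k ∈ range r, X ^ k * C (((r - k + 1).choose 2 : ℝ)) =
      C (((r + 1).choose 2 : ℝ)) - C (((r * (r + 2) : ℕ) : ℝ)) * X
        + C (((r + 2).choose 2 : ℝ)) * X ^ 2 - X ^ (r + 2) := by
  induction r, hr using Nat.le_induction with
  | base =>
    norm_num [map_ofNat]
    ring
  | succ r hr ih =>
    have hS : ∑ k ∈ range (r + 1), (X : ℝ[X]) ^ k * C (((r + 1 - k + 1).choose 2 : ℝ)) =
        X * ∑ k ∈ range r, X ^ k * C (((r - k + 1).choose 2 : ℝ)) + C (((r + 2).choose 2 : ℝ)) := by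
      rw [Finset.sum_range_succ', Finset.mul_sum]
      simp only [pow_zero, one_mul, Nat.succ_sub_succ_eq_sub]
      congr 1
      refine Finset.sum_congr rfl fun k hk => ?_
      ring
    have hb : (((r + 1) * (r + 1 + 2) : ℕ) : ℝ) =
        3 * (((r + 2).choose 2 : ℝ)) - (((r + 1).choose 2 : ℝ)) := by
      rw [Nat.cast_choose_two, Nat.cast_choose_two]; push_cast; ring
    have hc : (((r + 1 + 2).choose 2 : ℝ)) =
        3 * (((r + 2).choose 2 : ℝ)) - (((r * (r + 2) : ℕ) : ℝ)) := by
      rw [Nat.cast_choose_two, Nat.cast_choose_two]; push_cast; ring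
    rw [hS, mul_add, ← mul_assoc, mul_comm ((1 - (X:ℝ[X]))^3) X, mul_assoc, ih, hb, hc]
    simp only [map_sub, map_mul, map_ofNat, map_add]
    ring

lemma split_sum {M : Type*} [AddCommMonoid M] (p : ℕ) (hp : 1 ≤ p) (f : ℕ → M) :
    ∑ r ∈ range (p + 1), f r = f 0 + ∑ r ∈ Icc 1 p, f r := by
  rw [Finset.range_eq_Ico, Finset.sum_eq_sum_Ico_succ_bot (by omega), Finset.Ico_add_one_right_eq_Icc]

open Polynomial in
lemma main_poly (p : ℕ) (hp : 1 ≤ p) (zr : ℕ → ℝ) :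
    (1 - (X : ℝ[X])) ^ 3 *
        ∑ k ∈ range p, X ^ k * C (∑ r ∈ Icc (k + 1) p, zr r * ((r - k + 1).choose 2 : ℝ)) =
      ∑ r ∈ Icc 1 p, Polynomial.C (zr r) *
        (C (((r + 1).choose 2 : ℝ)) - C (((r * (r + 2) : ℕ) : ℝ)) * X
          + C (((r + 2).choose 2 : ℝ)) * X ^ 2 - X ^ (r + 2)) := by
  have h1 : ∑ k ∈ range p, (X : ℝ[X]) ^ k *
        C (∑ r ∈ Icc (k + 1) p, zr r * ((r - k + 1).choose 2 : ℝ)) =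
      ∑ r ∈ Icc 1 p, C (zr r) * ∑ k ∈ range r, X ^ k * C (((r - k + 1).choose 2 : ℝ)) := by
    have := Finset.sum_comm' (s := range p) (t := fun k => Icc (k + 1) p)
      (t' := Icc 1 p) (s' := fun r => range r)
      (f := fun k r => (X : ℝ[X]) ^ k * (C (zr r) * C (((r - k + 1).choose 2 : ℝ))))
      (by intro k r; simp only [Finset.mem_range, Finset.mem_Icc]; omega)
    simp only [map_sum, map_mul, Finset.mul_sum] at *
    rw [this]
    refine Finset.sum_congr rfl fun r _ => Finset.sum_congr rfl fun k _ => by ring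
  rw [h1, Finset.mul_sum]
  refine Finset.sum_congr rfl fun r hr => ?_
  rw [Finset.mem_Icc] at hr
  rw [← key_poly r hr.1]
  ring

/-- The invariant identity `u·𝒱(u,0) = (2/σ)/(I₀(u) − I₀(1))` for the generating
function `𝒱(u,v) = (2/σ)(1-uv)/((1-u)³(1-v)³Λ(u))` of the discrete harmonic function,
stated in the field of rational functions `ℝ(u)`. -/
theorem invariant_identity (p : ℕ) (hp : 1 ≤ p) (σ z : ℝ) (zr : ℕ → ℝ)
    (hzr : ∀ r, 0 ≤ zr r) (hzp : 0 < zr p) (hσ : 0 < σ)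
    (hdrift : z = ∑ r ∈ Icc 1 p, ((r + 1).choose 2 : ℝ) * zr r)
    (hnorm : z + ∑ r ∈ range (p + 1), ((r : ℝ) + 1) * zr r = 1) :
    let u : RatFunc ℝ := RatFunc.X
    let Λ : RatFunc ℝ := ∑ k ∈ range p,
      u ^ k * RatFunc.C (∑ r ∈ Icc (k + 1) p, zr r * ((r - k + 1).choose 2 : ℝ))
    let I₀ : RatFunc ℝ :=
      u + RatFunc.C z * u⁻¹ - ∑ r ∈ range (p + 1), RatFunc.C (zr r) * u ^ (r + 1)
    let I₀1 : ℝ := 1 + z - ∑ r ∈ range (p + 1), zr r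
    u * (RatFunc.C (2 / σ) * (1 - u * 0) / ((1 - u) ^ 3 * (1 - 0) ^ 3 * Λ)) =
      RatFunc.C (2 / σ) / (I₀ - RatFunc.C I₀1) := by
  intro u Λ I₀ I₀1
  -- scalars
  set I := 1 + z - ∑ r ∈ range (p + 1), zr r with hI
  -- scalar sum facts
  have hnorm' : ∑ r ∈ Icc 1 p, ((r : ℝ) + 1) * zr r = 1 - z - zr 0 := by
    rw [split_sum p hp (fun r => ((r : ℝ) + 1) * zr r)] at hnorm
    push_cast at hnorm ⊢
    linarith
  have hA : ∑ r ∈ Icc 1 p, zr r * (((r + 1).choose 2 : ℝ)) = z := by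
    rw [hdrift]; exact Finset.sum_congr rfl fun r _ => mul_comm _ _
  have hC : ∑ r ∈ Icc 1 p, zr r * (((r + 2).choose 2 : ℝ)) = 1 - zr 0 := by
    have : ∀ r ∈ Icc 1 p, zr r * (((r + 2).choose 2 : ℝ)) =
        (((r + 1).choose 2 : ℝ)) * zr r + ((r : ℝ) + 1) * zr r := by
      intro r _
      rw [Nat.cast_choose_two, Nat.cast_choose_two]; push_cast; ring
    rw [Finset.sum_congr rfl this, Finset.sum_add_distrib, ← hdrift, hnorm']
    ring
  have hB : ∑ r ∈ Icc 1 p, zr r * (((r * (r + 2) : ℕ) : ℝ)) = I := by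
    have : ∀ r ∈ Icc 1 p, zr r * (((r * (r + 2) : ℕ) : ℝ)) =
        2 * ((((r + 1).choose 2 : ℝ)) * zr r) + ((r : ℝ) + 1) * zr r - zr r := by
      intro r _
      rw [Nat.cast_choose_two]; push_cast; ring
    rw [Finset.sum_congr rfl this, Finset.sum_sub_distrib, Finset.sum_add_distrib,
      ← Finset.mul_sum, ← hdrift, hnorm', hI, split_sum p hp (fun r => zr r)]
    ring
  -- polynomial identity
  have hJ : (Polynomial.X : Polynomial ℝ) ^ 2 + Polynomial.C z - Polynomial.C I * Polynomial.X
        - ∑ r ∈ range (p + 1), Polynomial.C (zr r) * Polynomial.X ^ (r + 2) =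
      (1 - (Polynomial.X : Polynomial ℝ)) ^ 3 * ∑ k ∈ range p, Polynomial.X ^ k *
        Polynomial.C (∑ r ∈ Icc (k + 1) p, zr r * ((r - k + 1).choose 2 : ℝ)) := by
    rw [main_poly p hp zr]
    have expand : ∑ r ∈ Icc 1 p, Polynomial.C (zr r) *
        (Polynomial.C (((r + 1).choose 2 : ℝ)) - Polynomial.C (((r * (r + 2) : ℕ) : ℝ)) * Polynomial.X
          + Polynomial.C (((r + 2).choose 2 : ℝ)) * Polynomial.X ^ 2 - Polynomial.X ^ (r + 2)) =
        Polynomial.C (∑ r ∈ Icc 1 p, zr r * (((r + 1).choose 2 : ℝ)))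
          - Polynomial.C (∑ r ∈ Icc 1 p, zr r * (((r * (r + 2) : ℕ) : ℝ))) * Polynomial.X
          + Polynomial.C (∑ r ∈ Icc 1 p, zr r * (((r + 2).choose 2 : ℝ))) * Polynomial.X ^ 2
          - ∑ r ∈ Icc 1 p, Polynomial.C (zr r) * Polynomial.X ^ (r + 2) := by
      simp only [map_sum, map_mul, Finset.sum_mul, ← Finset.sum_sub_distrib,
        ← Finset.sum_add_distrib]
      refine Finset.sum_congr rfl fun r _ => by ring
    rw [expand, hA, hB, hC,
      split_sum p hp (fun r => Polynomial.C (zr r) * Polynomial.X ^ (r + 2))]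
    simp only [map_sub, map_add, map_one]
    ring
  -- Λ as image of a nonzero polynomial
  set Λp : Polynomial ℝ := ∑ k ∈ range p, Polynomial.X ^ k *
    Polynomial.C (∑ r ∈ Icc (k + 1) p, zr r * ((r - k + 1).choose 2 : ℝ)) with hΛp
  have hΛmap : Λ = algebraMap (Polynomial ℝ) (RatFunc ℝ) Λp := by
    simp only [Λ, hΛp, map_sum, map_mul, map_pow, RatFunc.algebraMap_X, RatFunc.algebraMap_C, u]
  have hΛpne : Λp ≠ 0 := by
    intro h
    have hcoeff : Λp.coeff (p - 1) =
        ∑ r ∈ Icc (p - 1 + 1) p, zr r * (((r - (p - 1) + 1).choose 2 : ℝ)) := by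
      rw [hΛp, Polynomial.finset_sum_coeff]
      rw [Finset.sum_eq_single (p - 1)]
      · rw [mul_comm, Polynomial.coeff_C_mul, Polynomial.coeff_X_pow, if_pos rfl, mul_one]
      · intro k _ hk
        rw [mul_comm, Polynomial.coeff_C_mul, Polynomial.coeff_X_pow, if_neg (by omega), mul_zero]
      · intro hmem
        exact absurd (Finset.mem_range.mpr (by omega)) hmem
    have hp1 : p - 1 + 1 = p := by omega
    have hp2 : p - (p - 1) + 1 = 2 := by omega
    rw [h, Polynomial.coeff_zero, hp1, Finset.Icc_self, Finset.sum_singleton, hp2] at hcoeff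
    norm_num at hcoeff
    exact absurd hcoeff.symm (ne_of_gt hzp)
  have hΛne : Λ ≠ 0 := by
    rw [hΛmap]; exact RatFunc.algebraMap_ne_zero hΛpne
  -- key identity in RatFunc
  have hx : u * u⁻¹ = 1 := mul_inv_cancel₀ RatFunc.X_ne_zero
  have hkey : u * (I₀ - RatFunc.C I) = (1 - u) ^ 3 * Λ := by
    have hrhs : (1 - u) ^ 3 * Λ =
        algebraMap (Polynomial ℝ) (RatFunc ℝ) ((1 - Polynomial.X) ^ 3 * Λp) := by
      rw [hΛmap, map_mul, map_pow, map_sub, map_one, RatFunc.algebraMap_X]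
    rw [hrhs, ← hJ]
    simp only [I₀, map_sub, map_add, map_mul, map_pow, map_sum, RatFunc.algebraMap_X,
      RatFunc.algebraMap_C, u]
    have hsum : RatFunc.X * ∑ r ∈ range (p + 1), RatFunc.C (zr r) * RatFunc.X ^ (r + 1) =
        ∑ r ∈ range (p + 1), RatFunc.C (zr r) * RatFunc.X ^ (r + 2) := by
      rw [Finset.mul_sum]
      exact Finset.sum_congr rfl fun r _ => by ring
    have hu : u = RatFunc.X := rfl
    linear_combination RatFunc.C z * hx - hsum
  have h1u : (1 : RatFunc ℝ) - u ≠ 0 := by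
    have h1x : (1 : Polynomial ℝ) - Polynomial.X ≠ 0 := by
      intro h
      have := congrArg (fun q => Polynomial.coeff q 1) h
      simp [Polynomial.coeff_one] at this
    have := RatFunc.algebraMap_ne_zero (K := ℝ) h1x
    rwa [map_sub, map_one, RatFunc.algebraMap_X] at this
  have hD : I₀ - RatFunc.C I ≠ 0 := by
    intro h
    rw [h, mul_zero] at hkey
    exact (mul_ne_zero (pow_ne_zero 3 h1u) hΛne) hkey.symm
  -- conclude
  show u * (RatFunc.C (2 / σ) * (1 - u * 0) / ((1 - u) ^ 3 * (1 - 0) ^ 3 * Λ)) =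
    RatFunc.C (2 / σ) / (I₀ - RatFunc.C I)
  simp only [mul_zero, sub_zero, one_pow, mul_one]
  rw [mul_div_assoc', div_eq_div_iff (mul_ne_zero (pow_ne_zero 3 h1u) hΛne) hD]
  linear_combination RatFunc.C (2 / σ) * hkey
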